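/- Let 0 < α < 1, let C be a spherical {α, −α}-code of size n in R^r with Gram matrix M. Then for all i ∈ [n] and x ∈ R^n: ((1−α^2)/(2α^2))(<x, Mx> − (Mx)_i^2) + (1/(α^2 n + 1 − α^2)) (M^2 x)_i^2 ≥ <x, M^2 x>. -/

import Mathlib

/-!
Write `z = ∑ xₖ vₖ`, so that `(M x)ₖ = ⟪vₖ, z⟫`. Project the code onto `(vᵢ)ᗮ` and normalise
signs, `uⱼ = (⟪vᵢ, vⱼ⟫ / α) (vⱼ - ⟪vᵢ, vⱼ⟫ vᵢ)` for `j ≠ i`. The Gram matrix `G` of the `uⱼ` has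
diagonal `1 - α²` and off-diagonal entries `±α - α²`, so `G ⊙ G + 2α² G = (1 - α²)(α² J + I)`.
As `G ⊙ G ⪰ 0` (Schur), `G ⪯ β (I + α² J)` with `β = (1 - α²) / (2α²)`, hence
`U (I + α² J)⁻¹ Uᵀ ⪯ β I`. Evaluated at the projection `y` of `z`, and using
`⟪vₖ, z⟫ = ⟪vᵢ, vₖ⟫ ⟪vᵢ, z⟫ ± ⟪uₖ, y⟫`, this is the claim.
-/

open Matrix
open scoped RealInnerProductSpace

section Gram

variable {E : Type*} [NormedAddCommGroup E] [InnerProductSpace ℝ E] {ι : Type*} [Fintype ι]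

theorem sum_sum_mul_inner (u : ι → E) (e : ι → ℝ) :
    ∑ j, ∑ k, e j * e k * ⟪u j, u k⟫ = ‖∑ j, e j • u j‖ ^ 2 := by
  rw [← real_inner_self_eq_norm_sq, ← star_dotProduct_gram_mulVec]
  simp only [star_trivial, dotProduct, mulVec, gram_apply, Finset.mul_sum]
  exact Finset.sum_congr rfl fun j _ => Finset.sum_congr rfl fun k _ => by ring

theorem sum_sum_mul_inner_sq_nonneg (u : ι → E) (e : ι → ℝ) :
    0 ≤ ∑ j, ∑ k, e j * e k * ⟪u j, u k⟫ ^ 2 := by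
  have := ((posSemidef_gram ℝ u).hadamard (posSemidef_gram ℝ u)).dotProduct_mulVec_nonneg e
  simp only [star_trivial, dotProduct, mulVec, hadamard_apply, gram_apply, Finset.mul_sum] at this
  exact this.trans_eq (Finset.sum_congr rfl fun j _ => Finset.sum_congr rfl fun k _ => by ring)

theorem norm_sq_sum_smul_le_of_inner_sq_add [DecidableEq ι] (u : ι → E) {α : ℝ} (hα : 0 < α)
    (hu : ∀ j k, ⟪u j, u k⟫ ^ 2 + 2 * α ^ 2 * ⟪u j, u k⟫
      = (1 - α ^ 2) * (α ^ 2 + if j = k then 1 else 0)) (e : ι → ℝ) :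
    ‖∑ j, e j • u j‖ ^ 2
      ≤ (1 - α ^ 2) / (2 * α ^ 2) * (∑ j, e j ^ 2 + α ^ 2 * (∑ j, e j) ^ 2) := by
  have hid : ∑ j, ∑ k, e j * e k * ⟪u j, u k⟫ ^ 2 + 2 * α ^ 2 * ‖∑ j, e j • u j‖ ^ 2
      = (1 - α ^ 2) * (∑ j, e j ^ 2 + α ^ 2 * (∑ j, e j) ^ 2) := by
    calc _ = ∑ j, ∑ k, e j * e k * (1 - α ^ 2) * (α ^ 2 + if j = k then 1 else 0) := by
          rw [← sum_sum_mul_inner, Finset.mul_sum, ← Finset.sum_add_distrib]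
          simp_rw [Finset.mul_sum, ← Finset.sum_add_distrib, mul_assoc, ← hu]
          exact Finset.sum_congr rfl fun j _ => Finset.sum_congr rfl fun k _ => by ring
      _ = _ := by
          simp only [mul_add, mul_ite, mul_one, mul_zero, Finset.sum_add_distrib,
            Finset.sum_ite_eq, Finset.mem_univ, if_true]
          rw [sq (∑ j, e j), Finset.sum_mul_sum, add_comm]
          simp only [Finset.mul_sum]
          congr 1 <;> refine Finset.sum_congr rfl fun j _ => ?_
          · ring
          · exact Finset.sum_congr rfl fun k _ => by ring
  rw [div_mul_eq_mul_div, le_div_iff₀ (by positivity)]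
  nlinarith [sum_sum_mul_inner_sq_nonneg u e]

/-- Since `(I + κ J)⁻¹ = I - κ / (1 + κ |ι|) J`, this is
`Gram u ⪯ β (I + κ J) → U (I + κ J)⁻¹ Uᵀ ⪯ β I`; the test vector `e` is `(I + κ J)⁻¹ c`. -/
theorem sum_sq_inner_le_of_norm_sq_sum_smul_le (u : ι → E) {β κ : ℝ} (hβ : 0 ≤ β) (hκ : 0 ≤ κ)
    (hu : ∀ e : ι → ℝ, ‖∑ j, e j • u j‖ ^ 2 ≤ β * (∑ j, e j ^ 2 + κ * (∑ j, e j) ^ 2))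
    (y : E) :
    ∑ j, ⟪u j, y⟫ ^ 2 ≤ β * ‖y‖ ^ 2 + κ / (1 + κ * Fintype.card ι) * (∑ j, ⟪u j, y⟫) ^ 2 := by
  set c : ι → ℝ := fun j => ⟪u j, y⟫
  set s := ∑ j, c j
  have hτ : 0 < 1 + κ * Fintype.card ι := by positivity
  set t := κ / (1 + κ * Fintype.card ι) * s
  set e : ι → ℝ := fun j => c j - t
  set D := ∑ j, c j ^ 2 - t * s
  have hκe : κ * ∑ j, e j = t := by
    simp only [e, Finset.sum_sub_distrib, Finset.sum_const, Finset.card_univ, nsmul_eq_mul, t]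
    field_simp
    ring
  have hec : ∑ j, e j * c j = D := by
    simp only [e, sub_mul, Finset.sum_sub_distrib, ← Finset.mul_sum, D, s, sq]
  have hquad : ∑ j, e j ^ 2 + κ * (∑ j, e j) ^ 2 = D := by
    rw [← hec, sq (∑ j, e j), ← mul_assoc, hκe, Finset.mul_sum, ← Finset.sum_add_distrib]
    exact Finset.sum_congr rfl fun j _ => by simp only [e]; ring
  have hinner : ⟪∑ j, e j • u j, y⟫ = D := by
    simp only [sum_inner, real_inner_smul_left, ← hec, c]
  have hCS : D ^ 2 ≤ β * D * ‖y‖ ^ 2 := by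
    calc D ^ 2 ≤ (‖∑ j, e j • u j‖ * ‖y‖) ^ 2 := by
          rw [← hinner]; exact sq_le_sq.mpr ((abs_real_inner_le_norm _ _).trans (le_abs_self _))
      _ ≤ β * D * ‖y‖ ^ 2 := by
          rw [mul_pow, ← hquad]; exact mul_le_mul_of_nonneg_right (hu e) (by positivity)
  have hD : D ≤ β * ‖y‖ ^ 2 := by nlinarith [mul_nonneg hβ (sq_nonneg ‖y‖)]
  simp only [D, t] at hD
  linarith

end Gram

section Code

variable {E : Type*} [NormedAddCommGroup E] [InnerProductSpace ℝ E] {ι : Type*}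

noncomputable def signedProjection (α : ℝ) (v : ι → E) (i : ι) (j : {j // j ≠ i}) : E :=
  (⟪v i, v j⟫ / α) • (v j - ⟪v i, v j⟫ • v i)

variable {α : ℝ} {v : ι → E}

theorem inner_signedProjection_sq_add [DecidableEq ι] (hv : ∀ j, ‖v j‖ = 1)
    (hangle : ∀ j k, j ≠ k → |⟪v j, v k⟫| = α) (hα : α ≠ 0) (i : ι) (j k : {j // j ≠ i}) :
    ⟪signedProjection α v i j, signedProjection α v i k⟫ ^ 2
      + 2 * α ^ 2 * ⟪signedProjection α v i j, signedProjection α v i k⟫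
      = (1 - α ^ 2) * (α ^ 2 + if j = k then 1 else 0) := by
  have hvv : ∀ j, ⟪v j, v j⟫ = 1 := fun j => by rw [real_inner_self_eq_norm_sq, hv]; norm_num
  have hsq : ∀ j k, j ≠ k → ⟪v j, v k⟫ ^ 2 = α ^ 2 := fun j k h => by rw [← sq_abs, hangle j k h]
  have hp := hsq i j (Ne.symm j.2)
  have hq := hsq i k (Ne.symm k.2)
  have hinner : ⟪signedProjection α v i j, signedProjection α v i k⟫
      = (⟪v i, v j⟫ * ⟪v i, v k⟫ * ⟪v j, v k⟫ - ⟪v i, v j⟫ ^ 2 * ⟪v i, v k⟫ ^ 2) / α ^ 2 := by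
    simp only [signedProjection, real_inner_smul_left, real_inner_smul_right, inner_sub_left,
      inner_sub_right, hvv, real_inner_comm (v i) (v j)]
    field_simp
    ring
  rw [hinner, hp, hq]
  split_ifs with hjk
  · subst hjk
    rw [hvv, ← sq, hp]
    field_simp
    ring
  · have hX : (⟪v i, v j⟫ * ⟪v i, v k⟫ * ⟪v j, v k⟫) ^ 2 = α ^ 6 := by
      rw [mul_pow, mul_pow, hp, hq, hsq j k (fun h => hjk (Subtype.ext h))]; ring
    generalize ⟪v i, v j⟫ * ⟪v i, v k⟫ * ⟪v j, v k⟫ = X at hX ⊢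
    field_simp
    linear_combination hX

theorem inner_eq_add_inner_signedProjection (hv : ∀ j, ‖v j‖ = 1)
    (hangle : ∀ j k, j ≠ k → |⟪v j, v k⟫| = α) (hα : α ≠ 0) (i : ι) (j : {j // j ≠ i}) (z : E) :
    ⟪v j, z⟫ = ⟪v i, v j⟫ * ⟪v i, z⟫
      + ⟪v i, v j⟫ / α * ⟪signedProjection α v i j, z - ⟪v i, z⟫ • v i⟫ := by
  have hvv : ⟪v i, v i⟫ = 1 := by rw [real_inner_self_eq_norm_sq, hv]; norm_num
  have hp : ⟪v i, v j⟫ ^ 2 = α ^ 2 := by rw [← sq_abs, hangle i j (Ne.symm j.2)]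
  simp only [signedProjection, real_inner_smul_left, real_inner_smul_right, inner_sub_left,
    inner_sub_right, hvv, real_inner_comm (v i) (v j)]
  field_simp
  linear_combination (⟪v i, z⟫ * ⟪v i, v j⟫ - ⟪v j, z⟫) * hp

section Finite

variable [Fintype ι] [DecidableEq ι]

theorem sum_sq_inner_eq (hv : ∀ j, ‖v j‖ = 1) (hangle : ∀ j k, j ≠ k → |⟪v j, v k⟫| = α)
    (hα : α ≠ 0) (i : ι) (z : E) :
    ∑ k, ⟪v k, z⟫ ^ 2 = (1 + α ^ 2 * Fintype.card {j // j ≠ i}) * ⟪v i, z⟫ ^ 2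
      + 2 * α * ⟪v i, z⟫ * ∑ j, ⟪signedProjection α v i j, z - ⟪v i, z⟫ • v i⟫
      + ∑ j, ⟪signedProjection α v i j, z - ⟪v i, z⟫ • v i⟫ ^ 2 := by
  have hterm (j : {j // j ≠ i}) : ⟪v j, z⟫ ^ 2 = α ^ 2 * ⟪v i, z⟫ ^ 2
      + 2 * α * ⟪v i, z⟫ * ⟪signedProjection α v i j, z - ⟪v i, z⟫ • v i⟫
      + ⟪signedProjection α v i j, z - ⟪v i, z⟫ • v i⟫ ^ 2 := by
    have hp : ⟪v i, v j⟫ ^ 2 = α ^ 2 := by rw [← sq_abs, hangle i j (Ne.symm j.2)]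
    rw [inner_eq_add_inner_signedProjection hv hangle hα i j z]
    field_simp
    linear_combination (α * ⟪v i, z⟫ + ⟪signedProjection α v i j, z - ⟪v i, z⟫ • v i⟫) ^ 2 * hp
  rw [Fintype.sum_eq_add_sum_subtype_ne _ i, Finset.sum_congr rfl fun j _ => hterm j,
    Finset.sum_add_distrib, Finset.sum_add_distrib, Finset.sum_const, ← Finset.mul_sum]
  simp only [Finset.card_univ, nsmul_eq_mul]
  ring

theorem sum_inner_mul_inner_eq (hv : ∀ j, ‖v j‖ = 1) (hangle : ∀ j k, j ≠ k → |⟪v j, v k⟫| = α)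
    (hα : α ≠ 0) (i : ι) (z : E) :
    ∑ k, ⟪v i, v k⟫ * ⟪v k, z⟫ = (1 + α ^ 2 * Fintype.card {j // j ≠ i}) * ⟪v i, z⟫
      + α * ∑ j, ⟪signedProjection α v i j, z - ⟪v i, z⟫ • v i⟫ := by
  have hterm (j : {j // j ≠ i}) : ⟪v i, v j⟫ * ⟪v j, z⟫
      = α ^ 2 * ⟪v i, z⟫ + α * ⟪signedProjection α v i j, z - ⟪v i, z⟫ • v i⟫ := by
    have hp : ⟪v i, v j⟫ ^ 2 = α ^ 2 := by rw [← sq_abs, hangle i j (Ne.symm j.2)]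
    rw [inner_eq_add_inner_signedProjection hv hangle hα i j z]
    field_simp
    linear_combination (α * ⟪v i, z⟫ + ⟪signedProjection α v i j, z - ⟪v i, z⟫ • v i⟫) * hp
  have hvv : ⟪v i, v i⟫ = 1 := by rw [real_inner_self_eq_norm_sq, hv]; norm_num
  rw [Fintype.sum_eq_add_sum_subtype_ne _ i, Finset.sum_congr rfl fun j _ => hterm j,
    Finset.sum_add_distrib, Finset.sum_const, ← Finset.mul_sum, hvv]
  simp only [Finset.card_univ, nsmul_eq_mul]
  ring

theorem sum_sq_inner_le (hα0 : 0 < α) (hα1 : α < 1) (hv : ∀ j, ‖v j‖ = 1)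
    (hangle : ∀ j k, j ≠ k → |⟪v j, v k⟫| = α) (i : ι) (z : E) :
    ∑ k, ⟪v k, z⟫ ^ 2 ≤ (1 - α ^ 2) / (2 * α ^ 2) * (‖z‖ ^ 2 - ⟪v i, z⟫ ^ 2)
      + 1 / (α ^ 2 * Fintype.card ι + 1 - α ^ 2) * (∑ k, ⟪v i, v k⟫ * ⟪v k, z⟫) ^ 2 := by
  have hτ : 1 + α ^ 2 * (Fintype.card {j // j ≠ i} : ℝ) = α ^ 2 * Fintype.card ι + 1 - α ^ 2 := by
    simp only [ne_eq, Fintype.card_subtype_compl, Fintype.card_unique,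
      Nat.cast_sub (Fintype.card_pos_iff.mpr ⟨i⟩), Nat.cast_one]
    ring
  have hy : ‖z - ⟪v i, z⟫ • v i‖ ^ 2 = ‖z‖ ^ 2 - ⟪v i, z⟫ ^ 2 := by
    rw [norm_sub_sq_real, norm_smul, real_inner_smul_right, real_inner_comm, hv, Real.norm_eq_abs,
      mul_one, sq_abs]
    ring
  have hβ : 0 ≤ (1 - α ^ 2) / (2 * α ^ 2) := div_nonneg (by nlinarith) (by positivity)
  have hkey := sum_sq_inner_le_of_norm_sq_sum_smul_le _ hβ (sq_nonneg α)
    (norm_sq_sum_smul_le_of_inner_sq_add _ hα0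
      (inner_signedProjection_sq_add hv hangle hα0.ne' i)) (z - ⟪v i, z⟫ • v i)
  rw [sum_sq_inner_eq hv hangle hα0.ne' i, sum_inner_mul_inner_eq hv hangle hα0.ne', ← hy, ← hτ]
  have hτpos : 0 < 1 + α ^ 2 * (Fintype.card {j // j ≠ i} : ℝ) := by positivity
  generalize 1 + α ^ 2 * (Fintype.card {j // j ≠ i} : ℝ) = τ at hkey hτpos ⊢
  generalize ∑ j, ⟪signedProjection α v i j, z - ⟪v i, z⟫ • v i⟫ = s at hkey ⊢
  have hexpand : 1 / τ * (τ * ⟪v i, z⟫ + α * s) ^ 2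
      = τ * ⟪v i, z⟫ ^ 2 + 2 * α * ⟪v i, z⟫ * s + α ^ 2 / τ * s ^ 2 := by
    field_simp; ring
  rw [hexpand]
  linarith

end Finite

end Code

section GramMatrix

variable {E : Type*} [NormedAddCommGroup E] [InnerProductSpace ℝ E] {ι : Type*} [Fintype ι]

theorem gram_mulVec_apply (v : ι → E) (x : ι → ℝ) (j : ι) :
    (gram ℝ v *ᵥ x) j = ⟪v j, ∑ k, x k • v k⟫ := by
  simp only [mulVec, dotProduct, gram_apply, inner_sum, real_inner_smul_right, mul_comm]

theorem dotProduct_gram_mulVec (v : ι → E) (x : ι → ℝ) :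
    x ⬝ᵥ gram ℝ v *ᵥ x = ‖∑ k, x k • v k‖ ^ 2 := by
  rw [← real_inner_self_eq_norm_sq, ← star_dotProduct_gram_mulVec, star_trivial]

theorem gram_mul_gram_mulVec_apply (v : ι → E) (x : ι → ℝ) (i : ι) :
    ((gram ℝ v * gram ℝ v) *ᵥ x) i = ∑ k, ⟪v i, v k⟫ * ⟪v k, ∑ k, x k • v k⟫ := by
  rw [← mulVec_mulVec, mulVec, dotProduct]
  simp only [gram_mulVec_apply, gram_apply]

theorem dotProduct_gram_mul_gram_mulVec (v : ι → E) (x : ι → ℝ) :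
    x ⬝ᵥ (gram ℝ v * gram ℝ v) *ᵥ x = ∑ k, ⟪v k, ∑ k, x k • v k⟫ ^ 2 := by
  rw [← mulVec_mulVec, dotProduct_mulVec, ← mulVec_transpose,
    ← conjTranspose_eq_transpose_of_trivial, (isHermitian_gram ℝ v).eq]
  simp only [dotProduct, gram_mulVec_apply, sq]

end GramMatrix

/-- Standard-basis-vector inequality for spherical `{α, −α}`-codes. -/
theorem stmt5 (r n : ℕ) (α : ℝ) (hα0 : 0 < α) (hα1 : α < 1)
    (v : Fin n → EuclideanSpace ℝ (Fin r)) (hv : ∀ i, ‖v i‖ = 1)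
    (hangle : ∀ i j, i ≠ j → |(inner ℝ (v i) (v j) : ℝ)| = α)
    (M : Matrix (Fin n) (Fin n) ℝ) (hM : ∀ i j, M i j = inner ℝ (v i) (v j))
    (i : Fin n) (x : Fin n → ℝ) :
    (1 - α ^ 2) / (2 * α ^ 2) * (x ⬝ᵥ M.mulVec x - (M.mulVec x i) ^ 2)
      + 1 / (α ^ 2 * n + 1 - α ^ 2) * ((M * M).mulVec x i) ^ 2
      ≥ x ⬝ᵥ (M * M).mulVec x := by
  obtain rfl : M = gram ℝ v := Matrix.ext hM
  rw [ge_iff_le, dotProduct_gram_mulVec, dotProduct_gram_mul_gram_mulVec,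
    gram_mul_gram_mulVec_apply, gram_mulVec_apply]
  simpa using sum_sq_inner_le hα0 hα1 hv hangle i (∑ k, x k • v k)
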